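/- In the quasilinear Fisher market, weak duality holds: if (x, u, δ) satisfies xᵢ ∈ L^∞(Θ)₊, Σᵢ xᵢ ≤ 1 a.e., 0 < uᵢ ≤ ⟨vᵢ, xᵢ⟩ + δᵢ, δᵢ ≥ 0, and (p, β) satisfies p ∈ L¹(Θ)₊, 0 < βᵢ ≤ 1, p ≥ βᵢvᵢ a.e., then Σᵢ (Bᵢ log uᵢ − δᵢ) ≤ ⟨p, 1⟩ − Σᵢ Bᵢ log βᵢ + Σᵢ Bᵢ(log Bᵢ − 1). -/

import Mathlib

/-!
Weak duality is the sum over buyers of two elementary bounds. The concave map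
`u ↦ B log u - β u` peaks at `u = B / β`, so `B log u ≤ B (log B - 1) - B log β + β u`.
Then `β u ≤ β ⟨v, x⟩ + δ ≤ ⟨p, x⟩ + δ` because `β ≤ 1` and `β v ≤ p`, and summing
`⟨p, xᵢ⟩` over the buyers costs at most `⟨p, 1⟩` because `∑ xᵢ ≤ 1` and `p ≥ 0`.
-/

open MeasureTheory

theorem mul_log_sub_mul_le {B β u : ℝ} (hB : 0 < B) (hβ : 0 < β) (hu : 0 < u) :
    B * Real.log u - β * u ≤ B * (Real.log B - 1) - B * Real.log β := by
  have hlog : Real.log (β * u / B) ≤ β * u / B - 1 := Real.log_le_sub_one_of_pos (by positivity)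
  rw [Real.log_div (by positivity) hB.ne', Real.log_mul hβ.ne' hu.ne'] at hlog
  have hscaled := mul_le_mul_of_nonneg_left hlog hB.le
  rw [mul_sub B (β * u / B), mul_div_cancel₀ _ hB.ne'] at hscaled
  linarith

section Integrals

variable {Θ : Type*} [MeasurableSpace Θ] {μ : Measure Θ}

theorem mul_le_integral_mul_add {v x p : Θ → ℝ} {β u δ : ℝ} (hβ₀ : 0 ≤ β) (hβ₁ : β ≤ 1)
    (hδ : 0 ≤ δ) (hu : u ≤ (∫ θ, v θ * x θ ∂μ) + δ)
    (hvx : Integrable (fun θ => v θ * x θ) μ) (hpx : Integrable (fun θ => p θ * x θ) μ)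
    (hx : ∀ᵐ θ ∂μ, 0 ≤ x θ) (hdom : ∀ᵐ θ ∂μ, β * v θ ≤ p θ) :
    β * u ≤ (∫ θ, p θ * x θ ∂μ) + δ := by
  have hprice : β * ∫ θ, v θ * x θ ∂μ ≤ ∫ θ, p θ * x θ ∂μ := by
    rw [← integral_const_mul]
    refine integral_mono_ae (hvx.const_mul β) hpx ?_
    filter_upwards [hdom, hx] with θ hθ hxθ
    simpa only [mul_assoc] using mul_le_mul_of_nonneg_right hθ hxθ
  nlinarith [mul_le_mul_of_nonneg_left hu hβ₀]

theorem sum_integral_mul_le_integral {ι : Type*} [Fintype ι] {p : Θ → ℝ} {x : ι → Θ → ℝ}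
    (hp : Integrable p μ) (hp₀ : ∀ᵐ θ ∂μ, 0 ≤ p θ)
    (hpx : ∀ i, Integrable (fun θ => p θ * x i θ) μ)
    (hx : ∀ᵐ θ ∂μ, ∑ i, x i θ ≤ 1) :
    ∑ i, ∫ θ, p θ * x i θ ∂μ ≤ ∫ θ, p θ ∂μ := by
  rw [← integral_finsetSum _ fun i _ => hpx i]
  refine integral_mono_ae (integrable_finsetSum _ fun i _ => hpx i) hp ?_
  filter_upwards [hx, hp₀] with θ hθ hpθ
  calc ∑ i, p θ * x i θ = p θ * ∑ i, x i θ := (Finset.mul_sum _ _ _).symm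
    _ ≤ p θ := mul_le_of_le_one_right hpθ hθ

end Integrals

theorem stmt16_general {Θ : Type*} [MeasurableSpace Θ] (μ : Measure Θ)
    (n : ℕ) (B : Fin n → ℝ) (hB : ∀ i, 0 < B i)
    (v : Fin n → Θ → ℝ) (hvint : ∀ i, Integrable (v i) μ)
    (x : Fin n → Θ → ℝ) (hx : ∀ i, MemLp (x i) ⊤ μ)
    (hxnn : ∀ i, ∀ᵐ θ ∂μ, 0 ≤ x i θ)
    (hsupply : ∀ᵐ θ ∂μ, ∑ i, x i θ ≤ 1)
    (u δ : Fin n → ℝ) (hupos : ∀ i, 0 < u i) (hδ : ∀ i, 0 ≤ δ i)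
    (huc : ∀ i, u i ≤ (∫ θ, v i θ * x i θ ∂μ) + δ i)
    (p : Θ → ℝ) (hp : Integrable p μ) (hpnn : ∀ᵐ θ ∂μ, 0 ≤ p θ)
    (β : Fin n → ℝ) (hβpos : ∀ i, 0 < β i) (hβle : ∀ i, β i ≤ 1)
    (hdom : ∀ i, ∀ᵐ θ ∂μ, β i * v i θ ≤ p θ) :
    ∑ i, (B i * Real.log (u i) - δ i) ≤
      (∫ θ, p θ ∂μ) - (∑ i, B i * Real.log (β i)) +
        ∑ i, B i * (Real.log (B i) - 1) := by
  have hpx : ∀ i, Integrable (fun θ => p θ * x i θ) μ := fun i => hp.mul_of_top_left (hx i)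
  have hbuyer : ∀ i, B i * Real.log (u i) - δ i ≤
      B i * (Real.log (B i) - 1) - B i * Real.log (β i) + ∫ θ, p θ * x i θ ∂μ := fun i => by
    have hconcave := mul_log_sub_mul_le (hB i) (hβpos i) (hupos i)
    have hspend := mul_le_integral_mul_add (hβpos i).le (hβle i) (hδ i) (huc i)
      ((hvint i).mul_of_top_left (hx i)) (hpx i) (hxnn i) (hdom i)
    linarith
  calc ∑ i, (B i * Real.log (u i) - δ i)
      ≤ ∑ i, (B i * (Real.log (B i) - 1) - B i * Real.log (β i) + ∫ θ, p θ * x i θ ∂μ) :=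
        Finset.sum_le_sum fun i _ => hbuyer i
    _ ≤ (∫ θ, p θ ∂μ) - (∑ i, B i * Real.log (β i)) + ∑ i, B i * (Real.log (B i) - 1) := by
        rw [Finset.sum_add_distrib, Finset.sum_sub_distrib]
        linarith [sum_integral_mul_le_integral hp hpnn hpx hsupply]

theorem stmt16 {Θ : Type*} [MeasurableSpace Θ] (μ : Measure Θ) [IsFiniteMeasure μ]
    (n : ℕ) (B : Fin n → ℝ) (hB : ∀ i, 0 < B i)
    (v : Fin n → Θ → ℝ) (hvint : ∀ i, Integrable (v i) μ)
    (hvnn : ∀ i, ∀ᵐ θ ∂μ, 0 ≤ v i θ)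
    (x : Fin n → Θ → ℝ) (hx : ∀ i, MemLp (x i) ⊤ μ)
    (hxnn : ∀ i, ∀ᵐ θ ∂μ, 0 ≤ x i θ)
    (hsupply : ∀ᵐ θ ∂μ, ∑ i, x i θ ≤ 1)
    (u δ : Fin n → ℝ) (hupos : ∀ i, 0 < u i) (hδ : ∀ i, 0 ≤ δ i)
    (huc : ∀ i, u i ≤ (∫ θ, v i θ * x i θ ∂μ) + δ i)
    (p : Θ → ℝ) (hp : Integrable p μ) (hpnn : ∀ᵐ θ ∂μ, 0 ≤ p θ)
    (β : Fin n → ℝ) (hβpos : ∀ i, 0 < β i) (hβle : ∀ i, β i ≤ 1)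
    (hdom : ∀ i, ∀ᵐ θ ∂μ, β i * v i θ ≤ p θ) :
    ∑ i, (B i * Real.log (u i) - δ i) ≤
      (∫ θ, p θ ∂μ) - (∑ i, B i * Real.log (β i)) +
        ∑ i, B i * (Real.log (B i) - 1) :=
  stmt16_general μ n B hB v hvint x hx hxnn hsupply u δ hupos hδ huc p hp hpnn β hβpos hβle hdom
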